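/- Every satisfiable flat CTL formula φ (temporal depth at most 1, arbitrary CTL operators, standard Boolean base) has a serial model of extent O(|φ|) and size O(|φ|²). Concretely, a satisfiable conjunction ⋀_{i=1}^m Eψᵢ ∧ ⋀_{j=1}^k Aξⱼ with all ψᵢ, ξⱼ of temporal depth ≤ 1 has a model consisting of a root with m branches, each a path of at most k + 2 worlds ending in a self-loop. -/

import Mathlib

def Serial {W : Type} (R : W → W → Prop) : Prop := ∀ w, ∃ u, R w u

def IsPath {W : Type} (R : W → W → Prop) (π : ℕ → W) : Prop := ∀ i, R (π i) (π (i+1))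

structure Kripke (W : Type) where
  R : W → W → Prop
  V : ℕ → W → Prop

inductive CTL where
  | atom : ℕ → CTL
  | neg  : CTL → CTL
  | and  : CTL → CTL → CTL
  | or   : CTL → CTL → CTL
  | AX : CTL → CTL
  | EX : CTL → CTL
  | AF : CTL → CTL
  | EF : CTL → CTL
  | AG : CTL → CTL
  | EG : CTL → CTL
  | AU : CTL → CTL → CTL
  | EU : CTL → CTL → CTL
  | AR : CTL → CTL → CTL
  | ER : CTL → CTL → CTL
deriving DecidableEq

def sat {W : Type} (K : Kripke W) : CTL → W → Prop
  | .atom p, w => K.V p w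
  | .neg φ, w => ¬ sat K φ w
  | .and φ ψ, w => sat K φ w ∧ sat K ψ w
  | .or φ ψ, w => sat K φ w ∨ sat K ψ w
  | .AX φ, w => ∀ π : ℕ → W, IsPath K.R π → π 0 = w → sat K φ (π 1)
  | .EX φ, w => ∃ π : ℕ → W, IsPath K.R π ∧ π 0 = w ∧ sat K φ (π 1)
  | .AF φ, w => ∀ π : ℕ → W, IsPath K.R π → π 0 = w → ∃ i, sat K φ (π i)
  | .EF φ, w => ∃ π : ℕ → W, IsPath K.R π ∧ π 0 = w ∧ ∃ i, sat K φ (π i)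
  | .AG φ, w => ∀ π : ℕ → W, IsPath K.R π → π 0 = w → ∀ i, sat K φ (π i)
  | .EG φ, w => ∃ π : ℕ → W, IsPath K.R π ∧ π 0 = w ∧ ∀ i, sat K φ (π i)
  | .AU φ ψ, w => ∀ π : ℕ → W, IsPath K.R π → π 0 = w →
      ∃ i, sat K ψ (π i) ∧ ∀ j, j < i → sat K φ (π j)
  | .EU φ ψ, w => ∃ π : ℕ → W, IsPath K.R π ∧ π 0 = w ∧
      ∃ i, sat K ψ (π i) ∧ ∀ j, j < i → sat K φ (π j)
  | .AR φ ψ, w => ∀ π : ℕ → W, IsPath K.R π → π 0 = w →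
      ∀ i, sat K ψ (π i) ∨ ∃ j, j < i ∧ sat K φ (π j)
  | .ER φ ψ, w => ∃ π : ℕ → W, IsPath K.R π ∧ π 0 = w ∧
      ∀ i, sat K ψ (π i) ∨ ∃ j, j < i ∧ sat K φ (π j)

def CTL.len : CTL → ℕ
  | .atom _ => 1
  | .neg φ => φ.len + 1
  | .and φ ψ => φ.len + ψ.len + 1
  | .or φ ψ => φ.len + ψ.len + 1
  | .AX φ => φ.len + 1
  | .EX φ => φ.len + 1
  | .AF φ => φ.len + 1
  | .EF φ => φ.len + 1
  | .AG φ => φ.len + 1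
  | .EG φ => φ.len + 1
  | .AU φ ψ => φ.len + ψ.len + 1
  | .EU φ ψ => φ.len + ψ.len + 1
  | .AR φ ψ => φ.len + ψ.len + 1
  | .ER φ ψ => φ.len + ψ.len + 1

def CTL.td : CTL → ℕ
  | .atom _ => 0
  | .neg φ => φ.td
  | .and φ ψ => max φ.td ψ.td
  | .or φ ψ => max φ.td ψ.td
  | .AX φ => φ.td + 1
  | .EX φ => φ.td + 1
  | .AF φ => φ.td + 1
  | .EF φ => φ.td + 1
  | .AG φ => φ.td + 1
  | .EG φ => φ.td + 1
  | .AU φ ψ => max φ.td ψ.td + 1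
  | .EU φ ψ => max φ.td ψ.td + 1
  | .AR φ ψ => max φ.td ψ.td + 1
  | .ER φ ψ => max φ.td ψ.td + 1

/-!
A flat formula is a Boolean combination of propositions and temporal atoms `Q ψ`, `Q` a path
quantifier and `ψ` a path condition with propositional arguments. At a world it therefore depends
only on the valuation there and on which temporal atoms hold along some, resp. all, traces of paths
from it. Along a trace, each path condition is decided at a single position: its first witness or
first counterexample (position `1` for `X`). Enumerating positions `0`, `1` and these decisive
positions increasingly and freezing at the last one yields a trace that is constant after
`|φ| + 1` steps and satisfies the same path conditions. Keeping one trace for each temporal atom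
and truth value that is realized, plus a default trace, and gluing the truncated traces at a common
root gives a model with `O(|φ|)` branches of length `O(|φ|)`.
-/

theorem CTL.len_pos (φ : CTL) : 0 < φ.len := by
  cases φ <;> simp [CTL.len]

theorem Serial.exists_isPath {W : Type} {R : W → W → Prop} (h : Serial R) (w : W) :
    ∃ π, IsPath R π ∧ π 0 = w := by
  choose f hf using h
  refine ⟨fun k => f^[k] w, fun i => ?_, rfl⟩
  show R (f^[i] w) (f^[i + 1] w)
  rw [Function.iterate_succ_apply']
  exact hf _

namespace FlatCTL

def Until (P Q : ℕ → Prop) : Prop := ∃ i, Q i ∧ ∀ j, j < i → P j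

theorem until_iff_of_isLeast {P Q : ℕ → Prop} {i₀ : ℕ} (h : IsLeast {i | Q i ∨ ¬P i} i₀) :
    Until P Q ↔ Q i₀ := by
  constructor
  · rintro ⟨i, hQ, hP⟩
    rcases (h.2 (Or.inl hQ) : i₀ ≤ i).lt_or_eq with hlt | rfl
    · exact h.1.resolve_right (not_not.mpr (hP i₀ hlt))
    · exact hQ
  · exact fun hQ => ⟨i₀, hQ, fun j hj => by_contra fun hP => (h.2 (Or.inr hP)).not_gt hj⟩

theorem until_comp_iff {σ : ℕ → ℕ} (hσ : Monotone σ) {P Q : ℕ → Prop}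
    (hhit : ∀ i, IsLeast {i | Q i ∨ ¬P i} i → i ∈ Set.range σ) :
    Until (P ∘ σ) (Q ∘ σ) ↔ Until P Q := by
  by_cases hex : ∃ i, Q i ∨ ¬P i
  · classical
    have hi₀ := Nat.isLeast_find hex
    have hk : ∃ k, σ k = Nat.find hex := hhit _ hi₀
    -- by monotonicity, the first hit along `σ` is the least `k` with `σ k = Nat.find hex`
    have hk₀ : IsLeast {k | (Q ∘ σ) k ∨ ¬(P ∘ σ) k} (Nat.find hk) := by
      refine ⟨by simpa [Nat.find_spec hk] using hi₀.1, fun k hk' => not_lt.mp fun hlt => ?_⟩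
      have hσk : σ k < Nat.find hex :=
        ((hσ hlt.le).trans_eq (Nat.find_spec hk)).lt_of_ne (Nat.find_min hk hlt)
      exact (hi₀.2 hk').not_gt hσk
    rw [until_iff_of_isLeast hk₀, until_iff_of_isLeast hi₀, Function.comp_apply, Nat.find_spec hk]
  · exact iff_of_false (fun ⟨k, hQ, _⟩ => hex ⟨σ k, .inl hQ⟩) (fun ⟨i, hQ, _⟩ => hex ⟨i, .inl hQ⟩)

theorem exists_comp_iff {σ : ℕ → ℕ} (hσ : Monotone σ) {Q : ℕ → Prop}
    (hhit : ∀ i, IsLeast {i | Q i} i → i ∈ Set.range σ) : (∃ k, Q (σ k)) ↔ ∃ i, Q i := by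
  have h := until_comp_iff hσ (P := fun _ => True) (Q := Q) (by simpa using hhit)
  simpa [Until] using h

theorem forall_comp_iff {σ : ℕ → ℕ} (hσ : Monotone σ) {P : ℕ → Prop}
    (hhit : ∀ i, IsLeast {i | ¬P i} i → i ∈ Set.range σ) : (∀ k, P (σ k)) ↔ ∀ i, P i :=
  not_iff_not.mp (by simpa only [not_forall] using exists_comp_iff hσ hhit)

theorem release_comp_iff {σ : ℕ → ℕ} (hσ : Monotone σ) {P Q : ℕ → Prop}
    (hhit : ∀ i, IsLeast {i | ¬Q i ∨ P i} i → i ∈ Set.range σ) :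
    (∀ k, Q (σ k) ∨ ∃ j, j < k ∧ P (σ j)) ↔ ∀ i, Q i ∨ ∃ j, j < i ∧ P j := by
  have h := until_comp_iff hσ (P := fun i => ¬P i) (Q := fun i => ¬Q i) (by simpa using hhit)
  refine not_iff_not.mp ?_
  simpa [Until] using h

-- The value `True` on temporal formulas is junk: they are only evaluated through `pathSat`.
def evalProp (v : ℕ → Prop) : CTL → Prop
  | .atom p => v p
  | .neg φ => ¬evalProp v φ
  | .and φ ψ => evalProp v φ ∧ evalProp v ψ
  | .or φ ψ => evalProp v φ ∨ evalProp v ψ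
  | _ => True

/-- The path condition of a temporal formula, its path quantifier dropped, along a trace: `t i`
is the valuation at the `i`-th world of a path. -/
def pathSat (t : ℕ → ℕ → Prop) : CTL → Prop
  | .AX φ | .EX φ => evalProp (t 1) φ
  | .AF φ | .EF φ => ∃ i, evalProp (t i) φ
  | .AG φ | .EG φ => ∀ i, evalProp (t i) φ
  | .AU φ ψ | .EU φ ψ => Until (fun i => evalProp (t i) φ) (fun i => evalProp (t i) ψ)
  | .AR φ ψ | .ER φ ψ => ∀ i, evalProp (t i) ψ ∨ ∃ j, j < i ∧ evalProp (t j) φ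
  | _ => True

def flatSat (v : ℕ → Prop) (T : Set (ℕ → ℕ → Prop)) : CTL → Prop
  | .atom p => v p
  | .neg φ => ¬flatSat v T φ
  | .and φ ψ => flatSat v T φ ∧ flatSat v T ψ
  | .or φ ψ => flatSat v T φ ∨ flatSat v T ψ
  | c@(.AX _) | c@(.AF _) | c@(.AG _) | c@(.AU _ _) | c@(.AR _ _) => ∀ t ∈ T, pathSat t c
  | c@(.EX _) | c@(.EF _) | c@(.EG _) | c@(.EU _ _) | c@(.ER _ _) => ∃ t ∈ T, pathSat t c

def temporalAtoms : CTL → Finset CTL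
  | .atom _ => ∅
  | .neg φ => temporalAtoms φ
  | .and φ ψ | .or φ ψ => temporalAtoms φ ∪ temporalAtoms ψ
  | c => {c}

theorem card_temporalAtoms_le (φ : CTL) : (temporalAtoms φ).card ≤ φ.len := by
  induction φ with
  | atom => simp [temporalAtoms]
  | neg φ ih => simpa [temporalAtoms, CTL.len] using ih.trans (Nat.le_succ _)
  | and φ ψ ihφ ihψ | or φ ψ ihφ ihψ =>
    exact (Finset.card_union_le _ _).trans (by simp only [CTL.len]; omega)
  | _ => simp [temporalAtoms, CTL.len]

def AgreeOn (D : Finset CTL) (T T' : Set (ℕ → ℕ → Prop)) : Prop :=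
  ∀ c ∈ D, ((∃ t ∈ T, pathSat t c) ↔ ∃ t ∈ T', pathSat t c) ∧
    ((∀ t ∈ T, pathSat t c) ↔ ∀ t ∈ T', pathSat t c)

theorem AgreeOn.mono {D D' : Finset CTL} {T T' : Set (ℕ → ℕ → Prop)} (h : AgreeOn D T T')
    (hD : D' ⊆ D) : AgreeOn D' T T' :=
  fun c hc => h c (hD hc)

theorem flatSat_congr {v : ℕ → Prop} {T T' : Set (ℕ → ℕ → Prop)} {φ : CTL}
    (h : AgreeOn (temporalAtoms φ) T T') : flatSat v T φ ↔ flatSat v T' φ := by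
  induction φ with
  | atom => rfl
  | neg φ ih => exact not_congr (ih h)
  | and φ ψ ihφ ihψ =>
    exact and_congr (ihφ (h.mono Finset.subset_union_left)) (ihψ (h.mono Finset.subset_union_right))
  | or φ ψ ihφ ihψ =>
    exact or_congr (ihφ (h.mono Finset.subset_union_left)) (ihψ (h.mono Finset.subset_union_right))
  | AX | AF | AG | AU | AR => exact (h _ (by simp [temporalAtoms])).2
  | EX | EF | EG | EU | ER => exact (h _ (by simp [temporalAtoms])).1

def traces {W : Type} (K : Kripke W) (w : W) : Set (ℕ → ℕ → Prop) :=
  (fun π i p => K.V p (π i)) '' {π | IsPath K.R π ∧ π 0 = w}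

theorem traces_nonempty {W : Type} {K : Kripke W} (hK : Serial K.R) (w : W) :
    (traces K w).Nonempty :=
  let ⟨π, hπ⟩ := hK.exists_isPath w
  ⟨_, π, hπ, rfl⟩

theorem apply_zero_of_mem_traces {W : Type} {K : Kripke W} {w : W} {t : ℕ → ℕ → Prop}
    (ht : t ∈ traces K w) : t 0 = fun p => K.V p w := by
  obtain ⟨π, ⟨-, h0⟩, rfl⟩ := ht
  simp only [h0]

theorem sat_iff_evalProp {W : Type} (K : Kripke W) {φ : CTL} (hφ : φ.td = 0) (w : W) :
    sat K φ w ↔ evalProp (fun p => K.V p w) φ := by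
  induction φ with
  | atom => rfl
  | neg φ ih => exact not_congr (ih hφ)
  | and φ ψ ihφ ihψ =>
    simp only [CTL.td, Nat.max_eq_zero_iff] at hφ
    exact and_congr (ihφ hφ.1) (ihψ hφ.2)
  | or φ ψ ihφ ihψ =>
    simp only [CTL.td, Nat.max_eq_zero_iff] at hφ
    exact or_congr (ihφ hφ.1) (ihψ hφ.2)
  | _ => simp [CTL.td] at hφ

theorem sat_iff_flatSat {W : Type} (K : Kripke W) (w : W) {φ : CTL} (hφ : φ.td ≤ 1) :
    sat K φ w ↔ flatSat (fun p => K.V p w) (traces K w) φ := by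
  induction φ with
  | atom => rfl
  | neg φ ih => exact not_congr (ih hφ)
  | and φ ψ ihφ ihψ =>
    simp only [CTL.td, max_le_iff] at hφ
    exact and_congr (ihφ hφ.1) (ihψ hφ.2)
  | or φ ψ ihφ ihψ =>
    simp only [CTL.td, max_le_iff] at hφ
    exact or_congr (ihφ hφ.1) (ihψ hφ.2)
  | _ =>
    simp only [CTL.td, add_le_iff_nonpos_left, nonpos_iff_eq_zero, Nat.max_eq_zero_iff] at hφ
    simp only [sat, flatSat, pathSat, traces, Set.forall_mem_image, Set.exists_mem_image]
    simp [Until, and_assoc, sat_iff_evalProp, hφ]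

section Truncation

open Classical

noncomputable def firstHit (H : ℕ → Prop) : Finset ℕ :=
  if h : ∃ i, H i then {Nat.find h} else ∅

theorem card_firstHit_le (H : ℕ → Prop) : (firstHit H).card ≤ 1 := by
  unfold firstHit; split <;> simp

theorem mem_firstHit_of_isLeast {H : ℕ → Prop} {i : ℕ} (h : IsLeast {i | H i} i) :
    i ∈ firstHit H := by
  have hex : ∃ i, H i := ⟨i, h.1⟩
  simpa [firstHit, hex] using h.unique (Nat.isLeast_find hex)

/-- The position at which the truth of a path formula along `t` is decided: its first witness or
first counterexample. Position `1`, which decides `AX`/`EX`, is always kept separately. -/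
noncomputable def hitPositions (t : ℕ → ℕ → Prop) : CTL → Finset ℕ
  | .AF φ | .EF φ => firstHit fun i => evalProp (t i) φ
  | .AG φ | .EG φ => firstHit fun i => ¬evalProp (t i) φ
  | .AU φ ψ | .EU φ ψ => firstHit fun i => evalProp (t i) ψ ∨ ¬evalProp (t i) φ
  | .AR φ ψ | .ER φ ψ => firstHit fun i => ¬evalProp (t i) ψ ∨ evalProp (t i) φ
  | _ => ∅

theorem card_hitPositions_le (t : ℕ → ℕ → Prop) (c : CTL) : (hitPositions t c).card ≤ 1 := by
  cases c <;> simp [hitPositions, card_firstHit_le]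

theorem pathSat_comp_iff {σ : ℕ → ℕ} (hσ : Monotone σ) (hσ1 : σ 1 = 1)
    (t : ℕ → ℕ → Prop) (c : CTL) (hc : ↑(hitPositions t c) ⊆ Set.range σ) :
    pathSat (t ∘ σ) c ↔ pathSat t c := by
  have hhit {H : ℕ → Prop} (hH : hitPositions t c = firstHit H) (i : ℕ)
      (hi : IsLeast {i | H i} i) : i ∈ Set.range σ :=
    hc (hH ▸ mem_firstHit_of_isLeast hi)
  cases c with
  | AX | EX => simp only [pathSat, Function.comp_apply, hσ1]
  | AF | EF => exact exists_comp_iff hσ (hhit rfl)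
  | AG | EG => exact forall_comp_iff hσ (hhit rfl)
  | AU | EU => exact until_comp_iff hσ (hhit rfl)
  | AR | ER => exact release_comp_iff hσ (hhit rfl)
  | atom | neg | and | or => rfl

theorem exists_monotone_enum (S : Finset ℕ) (h0 : 0 ∈ S) (h1 : 1 ∈ S) :
    ∃ σ : ℕ → ℕ, Monotone σ ∧ Set.range σ = S ∧ σ 0 = 0 ∧ σ 1 = 1 ∧
      ∀ k, σ k = σ (min k (S.card - 1)) := by
  have hcard : 2 ≤ S.card := Finset.one_lt_card.mpr ⟨0, h0, 1, h1, zero_ne_one⟩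
  set e := S.orderEmbOfFin rfl
  let clamp : ℕ → Fin S.card := fun k => ⟨min k (S.card - 1), by omega⟩
  have hclamp : Function.Surjective clamp := fun i => ⟨i, Fin.ext (min_eq_left (by omega))⟩
  have hmono : Monotone (e ∘ clamp) := fun a b hab => e.monotone (min_le_min_right _ hab)
  have hrange : Set.range (e ∘ clamp) = S := by
    rw [hclamp.range_comp, Finset.range_orderEmbOfFin]
  have hσ0 : e (clamp 0) = 0 := by
    obtain ⟨j, hj⟩ : 0 ∈ Set.range (e ∘ clamp) := hrange ▸ h0
    exact Nat.le_zero.mp ((hmono (Nat.zero_le j)).trans_eq hj)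
  have hσ1 : e (clamp 1) = 1 := by
    obtain ⟨j, hj⟩ : 1 ∈ Set.range (e ∘ clamp) := hrange ▸ h1
    have hj1 : 1 ≤ j := Nat.one_le_iff_ne_zero.mpr fun h => by simp_all
    have hpos : e (clamp 0) < e (clamp 1) := e.strictMono (Fin.mk_lt_mk.mpr (by omega))
    have : e (clamp 1) ≤ 1 := (hmono hj1).trans_eq hj
    omega
  refine ⟨e ∘ clamp, hmono, hrange, hσ0, hσ1, fun k => ?_⟩
  simp only [Function.comp_apply, clamp, min_assoc, min_self]

theorem exists_truncation (t : ℕ → ℕ → Prop) (D : Finset CTL) :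
    ∃ σ : ℕ → ℕ, σ 0 = 0 ∧ (∀ k, σ k = σ (min k (D.card + 1))) ∧
      ∀ c ∈ D, pathSat (t ∘ σ) c ↔ pathSat t c := by
  have hB := Finset.card_biUnion_le_card_mul D (hitPositions t) 1
    fun c _ => card_hitPositions_le t c
  have h1 := Finset.card_insert_le 1 (D.biUnion (hitPositions t))
  have h0 := Finset.card_insert_le 0 (insert 1 (D.biUnion (hitPositions t)))
  set S := insert 0 (insert 1 (D.biUnion (hitPositions t)))
  have hS : S.card ≤ D.card + 2 := by omega
  obtain ⟨σ, hmono, hrange, hσ0, hσ1, hσ⟩ :=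
    exists_monotone_enum S (by simp [S]) (by simp [S])
  refine ⟨σ, hσ0, fun k => ?_, fun c hc => pathSat_comp_iff hmono hσ1 t c ?_⟩
  · rw [hσ k, hσ (min k (D.card + 1))]
    congr 1
    omega
  · rw [hrange]
    intro i hi
    simp only [S, Finset.coe_insert, Finset.coe_biUnion]
    exact Or.inr (Or.inr (Set.mem_biUnion hc hi))

end Truncation

theorem exists_witness_choice {α J : Type} {T : Set α} (hT : T.Nonempty) (W : J → α → Prop) :
    ∃ f : Option J → α, (∀ r, f r ∈ T) ∧ ∀ j, (∃ t ∈ T, W j t) → W j (f (some j)) := by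
  have hg (j : J) : ∃ t ∈ T, (∃ t ∈ T, W j t) → W j t := by
    by_cases h : ∃ t ∈ T, W j t
    · obtain ⟨t, ht, hW⟩ := h
      exact ⟨t, ht, fun _ => hW⟩
    · exact ⟨hT.some, hT.some_mem, fun h' => absurd h' h⟩
  choose g hgT hgW using hg
  exact ⟨fun r => r.elim hT.some g, fun r => by cases r <;> simp [hT.some_mem, hgT], hgW⟩

theorem exists_truncated_family {v : ℕ → Prop} {T : Set (ℕ → ℕ → Prop)} (hT : T.Nonempty)
    (hT0 : ∀ t ∈ T, t 0 = v) (D : Finset CTL) :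
    ∃ b : Option (D × Bool) → ℕ → ℕ → Prop, (∀ r, b r 0 = v) ∧
      (∀ r k, b r k = b r (min k (D.card + 1))) ∧ AgreeOn D T (Set.range b) := by
  obtain ⟨f, hfT, hfW⟩ := exists_witness_choice hT fun (j : D × Bool) t => (pathSat t j.1 ↔ j.2)
  choose σ hσ0 hσ hσsat using fun r => exists_truncation (f r) D
  refine ⟨fun r => f r ∘ σ r, fun r => by simp [hσ0, hT0 _ (hfT r)],
    fun r k => congrArg (f r) (hσ r k), fun c hc => ⟨⟨?_, ?_⟩, ⟨?_, ?_⟩⟩⟩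
  · rintro ⟨t, ht, hsat⟩
    have hwit := (hfW (⟨c, hc⟩, true) ⟨t, ht, by simpa using hsat⟩).2 rfl
    exact ⟨_, ⟨some (⟨c, hc⟩, true), rfl⟩, (hσsat _ c hc).2 hwit⟩
  · rintro ⟨_, ⟨r, rfl⟩, hsat⟩
    exact ⟨f r, hfT r, (hσsat r c hc).1 hsat⟩
  · rintro hall _ ⟨r, rfl⟩
    exact (hσsat r c hc).2 (hall _ (hfT r))
  · intro hall t ht
    by_contra hsat
    have hwit := hfW (⟨c, hc⟩, false) ⟨t, ht, by simpa using hsat⟩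
    simpa using hwit.1 ((hσsat _ c hc).1 (hall _ ⟨_, rfl⟩))

section Fan

variable {ι : Type} (n : ℕ) (v : ℕ → Prop) (b : ι → ℕ → ℕ → Prop)

/-- The root is `none`; `some (r, j)` is the world at depth `j + 1` on branch `r`, and the last
world `j = n` of each branch carries a self-loop. -/
def fan : Kripke (Option (ι × Fin (n + 1))) where
  R x y := match x, y with
    | none, some (_, j) => j.val = 0
    | some (r, j), some (r', j') => r' = r ∧ j'.val = min (j.val + 1) n
    | _, none => False
  V p x := match x with
    | none => v p
    | some (r, j) => b r (j.val + 1) p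

def fanPath (r : ι) : ℕ → Option (ι × Fin (n + 1))
  | 0 => none
  | k + 1 => some (r, ⟨min k n, by omega⟩)

theorem fan_serial [Nonempty ι] : Serial (fan n v b).R
  | none => ⟨some (Classical.arbitrary ι, 0), rfl⟩
  | some (r, j) => ⟨some (r, ⟨min (j.val + 1) n, by omega⟩), rfl, rfl⟩

theorem isPath_fanPath (r : ι) : IsPath (fan n v b).R (fanPath n r)
  | 0 => Nat.zero_min n
  | k + 1 => ⟨rfl, by simp only; omega⟩

variable {n v b}

theorem isPath_fan_succ {π : ℕ → Option (ι × Fin (n + 1))} (hπ : IsPath (fan n v b).R π) :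
    ∃ r, ∀ k, ∃ j : Fin (n + 1), π (k + 1) = some (r, j) ∧ (π 0 = none → j.val = min k n) := by
  obtain ⟨r, j, h1⟩ : ∃ r j, π 1 = some (r, j) := by
    cases h : π 1 with
    | none => exact absurd (hπ 0) (by rw [h]; cases π 0 <;> exact id)
    | some x => exact ⟨x.1, x.2, rfl⟩
  refine ⟨r, fun k => ?_⟩
  induction k with
  | zero =>
    refine ⟨j, h1, fun h0 => ?_⟩
    have hj : j.val = 0 := by
      have h01 := hπ 0
      rwa [h0, h1] at h01
    omega
  | succ k ih =>
    obtain ⟨j, hj, hj0⟩ := ih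
    have hstep := hπ (k + 1)
    rw [hj] at hstep
    cases h : π (k + 1 + 1) with
    | none => rw [h] at hstep; exact hstep.elim
    | some y =>
      obtain ⟨r', j'⟩ := y
      rw [h] at hstep
      obtain ⟨rfl, hj'⟩ := hstep
      exact ⟨j', rfl, fun h0 => by rw [hj', hj0 h0]; omega⟩

theorem ncard_range_le_of_isPath_fan {π : ℕ → Option (ι × Fin (n + 1))}
    (hπ : IsPath (fan n v b).R π) : (Set.range π).ncard ≤ n + 2 := by
  obtain ⟨r, hr⟩ := isPath_fan_succ hπ
  have hsub : Set.range π ⊆ insert (π 0) (Set.range fun j => some (r, j)) := by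
    rintro _ ⟨k, rfl⟩
    cases k with
    | zero => exact Set.mem_insert _ _
    | succ k =>
      obtain ⟨j, hj, -⟩ := hr k
      exact Or.inr ⟨j, hj.symm⟩
  calc (Set.range π).ncard
      ≤ (insert (π 0) (Set.range fun j => some (r, j))).ncard :=
        Set.ncard_le_ncard hsub (Set.toFinite _)
    _ ≤ (Set.range fun j : Fin (n + 1) => some (r, j)).ncard + 1 := Set.ncard_insert_le _ _
    _ = n + 2 := by
      rw [Set.ncard_range_of_injective fun _ _ h => by simpa using h]
      simp

theorem traces_fan (hb0 : ∀ r, b r 0 = v) (hb : ∀ r k, b r k = b r (min k (n + 1))) :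
    traces (fan n v b) none = Set.range b := by
  have htrace (r : ι) : (fun i p => (fan n v b).V p (fanPath n r i)) = b r := by
    funext i p
    cases i with
    | zero => exact congrFun (hb0 r).symm p
    | succ k =>
      rw [hb r (k + 1)]
      show b r (min k n + 1) p = b r (min (k + 1) (n + 1)) p
      congr 2
      omega
  ext t
  constructor
  · rintro ⟨π, ⟨hπ, h0⟩, rfl⟩
    obtain ⟨r, hr⟩ := isPath_fan_succ hπ
    have hπr : π = fanPath n r := funext fun k => by
      cases k with
      | zero => exact h0
      | succ k =>
        obtain ⟨j, hj, hj0⟩ := hr k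
        rw [hj]
        simp [fanPath, Fin.ext_iff, hj0 h0]
    rw [hπr]
    exact ⟨r, (htrace r).symm⟩
  · rintro ⟨r, rfl⟩
    exact ⟨fanPath n r, ⟨isPath_fanPath n v b r, rfl⟩, htrace r⟩

end Fan

end FlatCTL

open FlatCTL

/-- Every satisfiable flat CTL formula `φ` (temporal depth at most 1, arbitrary CTL
operators, standard Boolean base) has a serial model of size `O(|φ|²)` and extent
`O(|φ|)` (every path visits at most `O(|φ|) + 1` distinct worlds). -/
theorem flat_CTL_quadratic_model_upper_bound :
    ∃ C : ℕ, 0 < C ∧ ∀ φ : CTL, φ.td ≤ 1 →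
      (∃ (W : Type) (K : Kripke W) (w : W), Serial K.R ∧ sat K φ w) →
      ∃ (W : Type) (inst : Fintype W) (K : Kripke W) (w : W),
        Serial K.R ∧ sat K φ w ∧
        @Fintype.card W inst ≤ C * φ.len ^ 2 ∧
        (∀ π : ℕ → W, IsPath K.R π → (Set.range π).ncard ≤ C * φ.len + 1) := by
  refine ⟨7, by norm_num, fun φ hφ ⟨W, K, w, hser, hsat⟩ => ?_⟩
  set D := temporalAtoms φ
  have hD : D.card ≤ φ.len := card_temporalAtoms_le φ
  have hlen := φ.len_pos
  obtain ⟨b, hb0, hb, hagree⟩ :=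
    exists_truncated_family (traces_nonempty hser w) (fun _ => apply_zero_of_mem_traces) D
  refine ⟨_, inferInstance, fan D.card (fun p => K.V p w) b, none, fan_serial _ _ _, ?_, ?_,
    fun π hπ => ?_⟩
  · rw [sat_iff_flatSat _ _ hφ, traces_fan hb0 hb]
    exact (flatSat_congr hagree).1 ((sat_iff_flatSat K w hφ).1 hsat)
  · simp only [Fintype.card_option, Fintype.card_prod, Fintype.card_bool, Fintype.card_fin,
      Fintype.card_coe]
    nlinarith
  · have := ncard_range_le_of_isPath_fan hπ
    omega
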